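/- Let (Φ, ω): (V, E) → (V', E') be a strong Dirac morphism of linear Dirac spaces (i.e. E' is the forward image of E under (Φ,ω) and ker(Φ,ω) ∩ E = {0}). Let F' ⊆ 𝕍' be a Lagrangian subspace transverse to E', with backward image F ⊆ 𝕍. Then F is transverse to E, and the bivectors π ∈ ∧²V and π' ∈ ∧²V' defined by the splittings 𝕍 = E ⊕ F and 𝕍' = E' ⊕ F' are Φ-related: (∧²Φ)(π) = π'. -/

import Mathlib

open Module

/-- The relation `w ~_{(Φ,ω)} w'` defined by a morphism `(Φ, ω)`, with the 2-form `ω` encoded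
as a skew-symmetric map `ωm : V → V*` (so `ι(v)ω = ωm v`). -/
def morphRel {K V V' : Type*} [Field K] [AddCommGroup V] [Module K V]
    [AddCommGroup V'] [Module K V']
    (Φ : V →ₗ[K] V') (ωm : V →ₗ[K] Module.Dual K V)
    (w : V × Module.Dual K V) (w' : V' × Module.Dual K V') : Prop :=
  Φ w.1 = w'.1 ∧ w'.2.comp Φ = w.2 + ωm w.1

/-!
The pairing on `V ⊕ V*` is nondegenerate, so a Lagrangian subspace has dimension `dim V`.
Since `ω` is alternating, related pairs of vectors have equal pairings, so the backward image `F`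
of `F'` is isotropic. It is also coisotropic: for `v ⊕ α ⊥ F`, the linear conditions on a covector
`ξ` saying that `Φ v ⊕ ξ ∈ F'` is related to `v ⊕ α` are consistent, because the functional they
prescribe vanishes on the kernel of `(v₁, u') ↦ Φ v₁ + pr u'` on `V × F'`: a kernel element yields
an element of `F`, to which `v ⊕ α` is orthogonal.
A vector of `E ∩ F` is related to a vector of `E' ∩ F' = 0`, so it lies in `ker(Φ,ω) ∩ E = 0`,
and counting dimensions gives `𝕍 = E ⊕ F`. Finally, if `0 ⊕ Φ*α' = u + x` with `u ∈ E` and `x ∈ F`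
related to `x' ∈ F'`, then `u` is related to `0 ⊕ α' - x' ∈ E'`, which is therefore the `E'`-part
of `0 ⊕ α'`, and `Φ (pr u) = pr (0 ⊕ α' - x')`.
-/

namespace LinearDirac

variable (K V : Type*) [Field K] [AddCommGroup V] [Module K V]

noncomputable def pairing : LinearMap.BilinForm K (V × Dual K V) :=
  LinearMap.BilinForm.congr (LinearEquiv.prodComm K (Dual K V) V) (LinearMap.dualProd K V)

variable {K V}

@[simp] lemma pairing_apply (w u : V × Dual K V) : pairing K V w u = w.2 u.1 + u.2 w.1 := by
  simp [pairing, add_comm]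

lemma pairing_nondegenerate : (pairing K V).Nondegenerate := by
  refine (LinearMap.BilinForm.nondegenerate_congr_iff _).2 ?_
  rw [LinearMap.BilinForm.Nondegenerate,
    (LinearMap.isSymm_dualProd K V).isRefl.nondegenerate_iff_separatingLeft,
    LinearMap.separatingLeft_dualProd]
  exact Module.eval_apply_injective K

def IsLagrangian (S : Set (V × Dual K V)) : Prop :=
  ∀ w, w ∈ S ↔ ∀ u ∈ S, w.2 u.1 + u.2 w.1 = 0

namespace IsLagrangian

variable {S : Set (V × Dual K V)} (hS : IsLagrangian S)
include hS

def submodule : Submodule K (V × Dual K V) where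
  carrier := S
  zero_mem' := (hS 0).2 fun u _ => by simp
  add_mem' {a b} ha hb := (hS _).2 fun u hu => by
    simp only [Prod.fst_add, Prod.snd_add, LinearMap.add_apply, map_add]
    linear_combination (hS a).1 ha u hu + (hS b).1 hb u hu
  smul_mem' c a ha := (hS _).2 fun u hu => by
    simp only [Prod.smul_fst, Prod.smul_snd, LinearMap.smul_apply, map_smul, smul_eq_mul]
    linear_combination c * (hS a).1 ha u hu

@[simp] lemma mem_submodule {w : V × Dual K V} : w ∈ hS.submodule ↔ w ∈ S := Iff.rfl

lemma orthogonal_submodule : (pairing K V).orthogonal hS.submodule = hS.submodule := by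
  ext w
  simp only [LinearMap.BilinForm.mem_orthogonal_iff, pairing_apply, mem_submodule, hS w]
  exact forall₂_congr fun u _ => by rw [add_comm]

lemma finrank_submodule [FiniteDimensional K V] : finrank K hS.submodule = finrank K V := by
  have h := LinearMap.BilinForm.finrank_orthogonal pairing_nondegenerate hS.submodule
  rw [hS.orthogonal_submodule, Module.finrank_prod, Subspace.dual_finrank_eq] at h
  omega

end IsLagrangian

end LinearDirac

open LinearDirac

section Morphism

variable {K V V' : Type*} [Field K] [AddCommGroup V] [Module K V] [AddCommGroup V'] [Module K V']
  {Φ : V →ₗ[K] V'} {ωm : V →ₗ[K] Dual K V}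

lemma morphRel.sub {w x : V × Dual K V} {w' x' : V' × Dual K V'} (hw : morphRel Φ ωm w w')
    (hx : morphRel Φ ωm x x') : morphRel Φ ωm (w - x) (w' - x') := by
  refine ⟨by simp [hw.1, hx.1], ?_⟩
  rw [Prod.snd_sub, LinearMap.sub_comp, hw.2, hx.2, Prod.fst_sub, Prod.snd_sub, map_sub]
  abel

lemma morphRel_zero_comp (α' : Dual K V') : morphRel Φ ωm (0, α'.comp Φ) (0, α') := by
  simp [morphRel]

lemma morphRel_zero_right_iff {w : V × Dual K V} :
    morphRel Φ ωm w 0 ↔ Φ w.1 = 0 ∧ w = (w.1, -ωm w.1) := by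
  simp only [morphRel, Prod.fst_zero, Prod.snd_zero, LinearMap.zero_comp, Prod.ext_iff,
    true_and, eq_neg_iff_add_eq_zero, eq_comm (a := (0 : Dual K V))]

lemma morphRel.pairing_eq (hω : ωm.IsAlt) {w x : V × Dual K V} {w' x' : V' × Dual K V'}
    (hw : morphRel Φ ωm w w') (hx : morphRel Φ ωm x x') :
    pairing K V' w' x' = pairing K V w x := by
  have hw₂ := LinearMap.congr_fun hw.2 x.1
  have hx₂ := LinearMap.congr_fun hx.2 w.1
  simp only [LinearMap.comp_apply, LinearMap.add_apply] at hw₂ hx₂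
  rw [pairing_apply, pairing_apply, ← hw.1, ← hx.1, hw₂, hx₂, ← hω.neg]
  ring

end Morphism

namespace LinearDirac

variable {K V V' : Type*} [Field K] [AddCommGroup V] [Module K V] [AddCommGroup V'] [Module K V']

def backwardImage (Φ : V →ₗ[K] V') (ωm : V →ₗ[K] Dual K V) (S' : Set (V' × Dual K V')) :
    Set (V × Dual K V) :=
  {w | ∃ w' ∈ S', morphRel Φ ωm w w'}

variable {Φ : V →ₗ[K] V'} {ωm : V →ₗ[K] Dual K V} {S' : Set (V' × Dual K V')}

lemma mem_backwardImage_of_forall_pairing_eq_zero (hω : ωm.IsAlt) (hS' : IsLagrangian S')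
    {w : V × Dual K V} (hw : ∀ x ∈ backwardImage Φ ωm S', w.2 x.1 + x.2 w.1 = 0) :
    w ∈ backwardImage Φ ωm S' := by
  -- We look for `w' = (Φ w.1, ξ) ∈ S'`; the two conditions on `ξ` say exactly that `ξ ∘ D = h`.
  let D : V × hS'.submodule →ₗ[K] V' :=
    Φ.coprod ((LinearMap.fst K V' (Dual K V')).comp hS'.submodule.subtype)
  let h : Dual K (V × hS'.submodule) := (w.2 + ωm w.1).coprod
    (-(Dual.eval K V' (Φ w.1)).comp ((LinearMap.snd K V' (Dual K V')).comp hS'.submodule.subtype))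
  have hker : h ∈ (LinearMap.ker D).dualAnnihilator := by
    rw [Submodule.mem_dualAnnihilator]
    rintro ⟨v, u', hu'⟩ hD
    have hD : Φ v + u'.1 = 0 := hD
    have hx : ((-v, u'.2.comp Φ + ωm v) : V × Dual K V) ∈ backwardImage Φ ωm S' :=
      ⟨u', hu', by simpa [neg_eq_iff_add_eq_zero] using hD, by simp⟩
    have horth := hw _ hx
    simp only [LinearMap.add_apply, LinearMap.comp_apply, map_neg] at horth
    simp only [h, LinearMap.coprod_apply, LinearMap.add_apply, LinearMap.neg_apply,
      LinearMap.comp_apply, Submodule.coe_subtype, LinearMap.snd_apply, Dual.eval_apply]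
    linear_combination -horth - hω.neg v w.1
  -- Naming `V₁` fixes the additive structure on `V × F'` before `D` is unified (else a timeout).
  obtain ⟨ξ, hξ⟩ :=
    (LinearMap.range_dualMap_eq_dualAnnihilator_ker (V₁ := V × hS'.submodule) D).ge hker
  refine ⟨(Φ w.1, ξ), (hS' _).2 fun u' hu' => ?_, rfl, ?_⟩
  · have hξu' : ξ u'.1 = -u'.2 (Φ w.1) := by
      simpa [D, h] using LinearMap.congr_fun hξ (0, ⟨u', hu'⟩)
    simp [hξu']
  · ext v
    simpa [D, h] using LinearMap.congr_fun hξ (v, 0)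

lemma IsLagrangian.backwardImage (hω : ωm.IsAlt) (hS' : IsLagrangian S') :
    IsLagrangian (backwardImage Φ ωm S') := by
  refine fun w => ⟨fun ⟨w', hw', hww'⟩ x ⟨x', hx', hxx'⟩ => ?_,
    mem_backwardImage_of_forall_pairing_eq_zero hω hS'⟩
  rw [← pairing_apply, ← hww'.pairing_eq hω hxx', pairing_apply]
  exact (hS' w').1 hw' x' hx'

lemma eq_zero_of_mem_backwardImage {E : Set (V × Dual K V)} {E' : Set (V' × Dual K V')}
    (hforward : ∀ w ∈ E, ∀ w', morphRel Φ ωm w w' → w' ∈ E')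
    (hstrong : ∀ v : V, Φ v = 0 → ((v, -(ωm v)) : V × Dual K V) ∈ E → v = 0)
    (htrans' : ∀ w', w' ∈ E' → w' ∈ S' → w' = 0)
    {w : V × Dual K V} (hwE : w ∈ E) (hwF : w ∈ backwardImage Φ ωm S') : w = 0 := by
  obtain ⟨w', hw'S', hww'⟩ := hwF
  obtain rfl := htrans' w' (hforward w hwE w' hww') hw'S'
  obtain ⟨hΦ, hw⟩ := morphRel_zero_right_iff.1 hww'
  have hw₁ : w.1 = 0 := hstrong w.1 hΦ (hw ▸ hwE)
  rw [hw, hw₁, map_zero, neg_zero, Prod.mk_zero_zero]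

lemma IsLagrangian.exists_add_of_disjoint [FiniteDimensional K V] {E F : Set (V × Dual K V)}
    (hE : IsLagrangian E) (hF : IsLagrangian F) (hEF : ∀ w ∈ E, w ∈ F → w = 0)
    (w : V × Dual K V) : ∃ u ∈ E, ∃ x ∈ F, w = u + x := by
  have hdisj : Disjoint hE.submodule hF.submodule :=
    Submodule.disjoint_def.2 fun w hwE hwF => hEF w hwE hwF
  have hsup : hE.submodule ⊔ hF.submodule = ⊤ := by
    refine Submodule.eq_top_of_disjoint _ _ ?_ hdisj
    rw [hE.finrank_submodule, hF.finrank_submodule, Module.finrank_prod, Subspace.dual_finrank_eq]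
  obtain ⟨u, hu, x, hx, hw⟩ := Submodule.mem_sup.1 (hsup ▸ Submodule.mem_top (x := w))
  exact ⟨u, hu, x, hx, hw.symm⟩

end LinearDirac

theorem pure_spinors_stmt15_general {K V V' : Type*} [Field K]
    [AddCommGroup V] [Module K V] [FiniteDimensional K V]
    [AddCommGroup V'] [Module K V']
    (Φ : V →ₗ[K] V') (ωm : V →ₗ[K] Module.Dual K V) (halt : ∀ v, ωm v v = 0)
    (E : Set (V × Module.Dual K V)) (E' F' : Set (V' × Module.Dual K V'))
    (hElag : ∀ w, w ∈ E ↔ ∀ u ∈ E, w.2 u.1 + u.2 w.1 = 0)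
    (hF'lag : ∀ w', w' ∈ F' ↔ ∀ u' ∈ F', w'.2 u'.1 + u'.2 w'.1 = 0)
    -- `(Φ, ω)` is a Dirac morphism: `E'` is the forward image of `E`
    (hforward : ∀ w', w' ∈ E' ↔ ∃ w ∈ E, morphRel Φ ωm w w')
    -- the Dirac morphism is strong: `ker(Φ,ω) ∩ E = {0}`
    (hstrong : ∀ v : V, Φ v = 0 → ((v, -(ωm v)) : V × Module.Dual K V) ∈ E → v = 0)
    -- `F'` is transverse to `E'`
    (htrans' : ∀ w', w' ∈ E' → w' ∈ F' → w' = 0)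
    -- `F` is the backward image of `F'`
    (F : Set (V × Module.Dual K V))
    (hF : F = {w | ∃ w' ∈ F', morphRel Φ ωm w w'}) :
    ((∀ w, w ∈ E → w ∈ F → w = 0) ∧
      (∀ w : V × Module.Dual K V, ∃ u ∈ E, ∃ x ∈ F, w = u + x)) ∧
    (∀ (p : (V × Module.Dual K V) →ₗ[K] (V × Module.Dual K V))
       (p' : (V' × Module.Dual K V') →ₗ[K] (V' × Module.Dual K V')),
      (∀ w ∈ E, p w = w) → (∀ w ∈ F, p w = 0) →
      (∀ w' ∈ E', p' w' = w') → (∀ w' ∈ F', p' w' = 0) →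
      ∀ α' : Module.Dual K V',
        Φ (-(p ((0 : V), α'.comp Φ)).1) = -(p' ((0 : V'), α')).1) := by
  change F = backwardImage Φ ωm F' at hF
  subst hF
  have hforward' : ∀ w ∈ E, ∀ w', morphRel Φ ωm w w' → w' ∈ E' :=
    fun w hw w' hww' => (hforward w').2 ⟨w, hw, hww'⟩
  have hEF : ∀ w, w ∈ E → w ∈ backwardImage Φ ωm F' → w = 0 :=
    fun w => eq_zero_of_mem_backwardImage hforward' hstrong htrans'
  have hspan :=
    IsLagrangian.exists_add_of_disjoint hElag (IsLagrangian.backwardImage halt hF'lag) hEF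
  refine ⟨⟨hEF, hspan⟩, fun p p' hpE hpF hp'E' hp'F' α' => ?_⟩
  obtain ⟨u, hu, x, hx, hdec⟩ := hspan (0, α'.comp Φ)
  obtain ⟨x', hx', hxx'⟩ := hx
  have huu' : morphRel Φ ωm u ((0, α') - x') := by
    simpa [hdec] using (morphRel_zero_comp α').sub hxx'
  have hp : p (0, α'.comp Φ) = u := by
    rw [hdec, map_add, hpE u hu, hpF x ⟨x', hx', hxx'⟩, add_zero]
  have hp' : p' (0, α') = (0, α') - x' := by
    rw [← sub_add_cancel (0, α') x', map_add, hp'E' _ (hforward' u hu _ huu'), hp'F' x' hx',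
      add_zero, sub_add_cancel]
  rw [hp, hp', map_neg, huu'.1]

/-- let `(Φ, ω) : (V, E) → (V', E')` be a strong Dirac morphism of linear
Dirac spaces, `F'` a Lagrangian complement of `E'`, and `F` the backward image of `F'`.
Then `F` is transverse to `E`, and the bivectors `π`, `π'` of the splittings `E ⊕ F` and
`E' ⊕ F'` (characterized by `π^♯(α) = -pr(p(α))` for the projections `p`, `p'` onto `E`
along `F` resp. onto `E'` along `F'`) are `Φ`-related: `Φ ∘ π^♯ ∘ Φ* = π'^♯`. -/
theorem pure_spinors_stmt15 {K V V' : Type*} [Field K] [CharZero K]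
    [AddCommGroup V] [Module K V] [FiniteDimensional K V]
    [AddCommGroup V'] [Module K V'] [FiniteDimensional K V']
    (Φ : V →ₗ[K] V') (ωm : V →ₗ[K] Module.Dual K V) (halt : ∀ v, ωm v v = 0)
    (E : Set (V × Module.Dual K V)) (E' F' : Set (V' × Module.Dual K V'))
    (hElag : ∀ w, w ∈ E ↔ ∀ u ∈ E, w.2 u.1 + u.2 w.1 = 0)
    (hE'lag : ∀ w', w' ∈ E' ↔ ∀ u' ∈ E', w'.2 u'.1 + u'.2 w'.1 = 0)
    (hF'lag : ∀ w', w' ∈ F' ↔ ∀ u' ∈ F', w'.2 u'.1 + u'.2 w'.1 = 0)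
    -- `(Φ, ω)` is a Dirac morphism: `E'` is the forward image of `E`
    (hforward : ∀ w', w' ∈ E' ↔ ∃ w ∈ E, morphRel Φ ωm w w')
    -- the Dirac morphism is strong: `ker(Φ,ω) ∩ E = {0}`
    (hstrong : ∀ v : V, Φ v = 0 → ((v, -(ωm v)) : V × Module.Dual K V) ∈ E → v = 0)
    -- `F'` is transverse to `E'`
    (htrans' : ∀ w', w' ∈ E' → w' ∈ F' → w' = 0)
    (hspan' : ∀ w' : V' × Module.Dual K V', ∃ u' ∈ E', ∃ x' ∈ F', w' = u' + x')
    -- `F` is the backward image of `F'`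
    (F : Set (V × Module.Dual K V))
    (hF : F = {w | ∃ w' ∈ F', morphRel Φ ωm w w'}) :
    ((∀ w, w ∈ E → w ∈ F → w = 0) ∧
      (∀ w : V × Module.Dual K V, ∃ u ∈ E, ∃ x ∈ F, w = u + x)) ∧
    (∀ (p : (V × Module.Dual K V) →ₗ[K] (V × Module.Dual K V))
       (p' : (V' × Module.Dual K V') →ₗ[K] (V' × Module.Dual K V')),
      (∀ w ∈ E, p w = w) → (∀ w ∈ F, p w = 0) →
      (∀ w' ∈ E', p' w' = w') → (∀ w' ∈ F', p' w' = 0) →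
      ∀ α' : Module.Dual K V',
        Φ (-(p ((0 : V), α'.comp Φ)).1) = -(p' ((0 : V'), α')).1) :=
  pure_spinors_stmt15_general Φ ωm halt E E' F' hElag hF'lag hforward hstrong htrans' F hF
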